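/- arXiv:math/0607406 — 3 statements merged into one kernel-verified Lean document; each statement's English description precedes it below -/
import Mathlib

section
/- Let (A(n))_{n∈ℤ} be a stationary ergodic sequence of random d×d max-plus matrices with strongly connected incidence graph, P(A_{ii}(0) = -∞) = 0 for every i, and max_{A_{ij}(0)≠-∞} A_{ij}^+(0) integrable. Then (1/n) y(n,0) → γ(A)·(1,…,1) almost surely, where y(n,0) = A(-1)⋯A(-n)·0 and γ(A) is the maximal Lyapunov exponent. -/
open Filter MeasureTheory Topology
noncomputable section

/-- The max-plus semiring ℝ ∪ {-∞}, modelled as `WithBot ℝ`: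
`⊥` is `-∞`, addition is the semiring multiplication, `Finset.sup` the semiring addition. -/
abbrev MP := WithBot ℝ

/-- Embedding of ℝ ∪ {-∞} into the extended reals. -/
def toE (x : MP) : EReal := WithBot.recBotCoe ⊥ (fun r : ℝ => (r : EReal)) x

instance : MeasurableSpace MP := MeasurableSpace.comap toE inferInstance

instance {d : ℕ} : MeasurableSpace (Matrix (Fin d) (Fin d) MP) :=
  inferInstanceAs (MeasurableSpace (Fin d → Fin d → MP))

/-- Max-plus matrix multiplication: `(AB)_{ij} = max_k (A_{ik} + B_{kj})`. -/
def mpMul {d : ℕ} (A B : Matrix (Fin d) (Fin d) MP) : Matrix (Fin d) (Fin d) MP :=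
  fun i j => Finset.univ.sup fun k => A i k + B k j

/-- Max-plus identity matrix. -/
def mpId (d : ℕ) : Matrix (Fin d) (Fin d) MP :=
  fun i j => if i = j then (0 : MP) else ⊥

/-- Max-plus action of a matrix on an MP vector: `(Ax)_i = max_j (A_{ij} + x_j)`. -/
def mpAct {d : ℕ} (A : Matrix (Fin d) (Fin d) MP) (x : Fin d → MP) : Fin d → MP :=
  fun i => Finset.univ.sup fun j => A i j + x j

/-- `A^n = A(n-1) ⋯ A(0)` (max-plus product). -/
def mpProdFwd {d : ℕ} (A : ℕ → Matrix (Fin d) (Fin d) MP) : ℕ → Matrix (Fin d) (Fin d) MP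
  | 0 => mpId d
  | n + 1 => mpMul (A n) (mpProdFwd A n)

/-- `A(-1) A(-2) ⋯ A(-n)`, for a two-sided sequence (max-plus product). -/
def mpProdNeg {d : ℕ} (A : ℤ → Matrix (Fin d) (Fin d) MP) : ℕ → Matrix (Fin d) (Fin d) MP
  | 0 => mpId d
  | n + 1 => mpMul (mpProdNeg A n) (A (-(n + 1 : ℕ)))

/-- A matrix has no line (row) entirely equal to -∞. -/
def noBotLine {d : ℕ} (A : Matrix (Fin d) (Fin d) MP) : Prop := ∀ i, ∃ j, A i j ≠ ⊥

/-- The positive part `x⁺ = max(x,0)` of an element of ℝ ∪ {-∞}, as a real number. -/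
def mpPlus (x : MP) : ℝ := max (WithBot.unbotD 0 x) 0

/-- `x_i(n,0) = max_j (A(n-1)⋯A(0))_{ij}`, i.e. `x(n,0) = A(n-1)⋯A(0)·0`. -/
def xvec {d : ℕ} (A : ℕ → Matrix (Fin d) (Fin d) MP) (n : ℕ) (i : Fin d) : MP :=
  Finset.univ.sup fun j => mpProdFwd A n i j

/-- `y_i(n,0) = max_j (A(-1)⋯A(-n))_{ij}`, i.e. `y(n,0) = A(-1)⋯A(-n)·0`. -/
def yvec {d : ℕ} (A : ℤ → Matrix (Fin d) (Fin d) MP) (n : ℕ) (i : Fin d) : MP :=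
  Finset.univ.sup fun j => mpProdNeg A n i j

/-- Bilateral iteration `θ^n` (n ∈ ℤ) of a map `θ` with inverse `θi`. -/
def zIter {Ω : Type*} (θ θi : Ω → Ω) (n : ℤ) (ω : Ω) : Ω :=
  if 0 ≤ n then θ^[n.toNat] ω else θi^[(-n).toNat] ω

/-- The submatrix supported on a subset `S` of indices, filled with -∞ elsewhere. -/
def mpRestrict {d : ℕ} (S : Finset (Fin d)) (A : Matrix (Fin d) (Fin d) MP) :
    Matrix (Fin d) (Fin d) MP :=
  fun i j => if i ∈ S ∧ j ∈ S then A i j else ⊥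

/-- Arc relation of the incidence graph `G(A)` of a random max-plus matrix. -/
def mpEdge {d : ℕ} {Ω : Type*} [MeasurableSpace Ω] (μ : Measure Ω)
    (A : Ω → Matrix (Fin d) (Fin d) MP) (a b : Fin d) : Prop :=
  0 < μ {ω | A ω a b ≠ ⊥}


/-!
By ergodicity of `θ⁻¹`, every arc of the incidence graph is realised infinitely often in the past,
and the diagonal entries are a.s. never `-∞`; along a path of the strongly connected graph this
makes all entries of `A(-1)⋯A(-N)` finite for some a.s. finite `N`. Writing
`A(-1)⋯A(-n) = (A(-1)⋯A(-N)) (A(-N-1)⋯A(-n))`, the rows of the product then stay within a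
constant (depending on `ω`) of each other, so every `y_i(n,0)` is within that constant of the
maximal entry, whose growth rate is `γ` by definition.
-/

lemma add_finset_sup {β : Type*} (c : MP) (s : Finset β) (f : β → MP) :
    c + s.sup f = s.sup fun b => c + f b :=
  Finset.apply_sup_eq_sup_comp_of_linearOrder (c + ·) (fun _ _ h => add_le_add_right h c)
    (WithBot.add_bot c)

lemma finset_sup_add {β : Type*} (s : Finset β) (f : β → MP) (c : MP) :
    s.sup f + c = s.sup fun b => f b + c := by
  simp only [add_comm _ c, add_finset_sup]

lemma toE_mono : Monotone toE := by
  intro x y h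
  induction x using WithBot.recBotCoe with
  | bot => exact bot_le
  | coe r =>
    obtain ⟨s, rfl, hrs⟩ := WithBot.coe_le_iff.1 h
    exact EReal.coe_le_coe_iff.2 hrs

lemma toE_add_coe (x : MP) (c : ℝ) : toE (x + c) = toE x + c := by
  induction x using WithBot.recBotCoe with
  | bot => rfl
  | coe r => exact EReal.coe_add r c

section MaxPlusProducts

variable {d : ℕ}

lemma le_mpMul (A B : Matrix (Fin d) (Fin d) MP) (i k j : Fin d) :
    A i k + B k j ≤ mpMul A B i j :=
  Finset.le_sup (f := fun k => A i k + B k j) (Finset.mem_univ k)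

lemma mpMul_mpId (A : Matrix (Fin d) (Fin d) MP) : mpMul A (mpId d) = A := by
  funext i j
  refine le_antisymm (Finset.sup_le fun k _ => ?_)
    (by simpa [mpId] using le_mpMul A (mpId d) i j j)
  by_cases h : k = j <;> simp [mpId, h]

lemma mpMul_assoc (A B C : Matrix (Fin d) (Fin d) MP) :
    mpMul (mpMul A B) C = mpMul A (mpMul B C) := by
  funext i j
  simp only [mpMul, finset_sup_add, add_finset_sup, add_assoc]
  exact Finset.sup_comm _ _ _

lemma mpProdNeg_add (A : ℤ → Matrix (Fin d) (Fin d) MP) (N m : ℕ) :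
    mpProdNeg A (N + m) = mpMul (mpProdNeg A N) (mpProdNeg (fun k => A (k - N)) m) := by
  induction m with
  | zero => simp [mpProdNeg, mpMul_mpId]
  | succ m ih =>
    have hidx : (-((N + m + 1 : ℕ) : ℤ)) = -((m + 1 : ℕ) : ℤ) - N := by push_cast; ring
    rw [← add_assoc, mpProdNeg, ih, mpMul_assoc, hidx]
    rfl

lemma mpMul_le_add_mpMul {X : Matrix (Fin d) (Fin d) MP} {c : MP} {p i : Fin d}
    (h : ∀ k, X p k ≤ c + X i k) (R : Matrix (Fin d) (Fin d) MP) (q : Fin d) :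
    mpMul X R p q ≤ c + mpMul X R i q := by
  simp only [mpMul, add_finset_sup]
  refine Finset.sup_mono_fun fun k _ => ?_
  rw [← add_assoc]
  gcongr
  exact h k

end MaxPlusProducts

section Finiteness

variable {d : ℕ} {A : ℤ → Matrix (Fin d) (Fin d) MP}

lemma mpProdNeg_succ_ne_bot {n : ℕ} {i b c : Fin d} (hib : mpProdNeg A n i b ≠ ⊥)
    (hbc : A (-(n + 1 : ℕ)) b c ≠ ⊥) : mpProdNeg A (n + 1) i c ≠ ⊥ :=
  ne_bot_of_le_ne_bot (WithBot.add_ne_bot.2 ⟨hib, hbc⟩) (le_mpMul _ _ i b c)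

lemma eventually_mpProdNeg_ne_bot {n : ℕ} {i j : Fin d}
    (hdiag : ∀ k : ℕ, A (-(k + 1 : ℕ)) j j ≠ ⊥) (h : mpProdNeg A n i j ≠ ⊥) :
    ∀ᶠ m in atTop, mpProdNeg A m i j ≠ ⊥ :=
  eventually_atTop.2 ⟨n, fun _ hm =>
    Nat.le_induction h (fun k _ ih => mpProdNeg_succ_ne_bot ih (hdiag k)) _ hm⟩

lemma exists_mpProdNeg_ne_bot {E : Fin d → Fin d → Prop}
    (hdiag : ∀ (k : ℕ) (i : Fin d), A (-(k + 1 : ℕ)) i i ≠ ⊥)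
    (hE : ∀ a b, E a b → ∃ᶠ n in atTop, A (-(n + 1 : ℕ)) a b ≠ ⊥)
    {i j : Fin d} (hij : Relation.ReflTransGen E i j) : ∃ n, mpProdNeg A n i j ≠ ⊥ := by
  induction hij with
  | refl => exact ⟨0, by simp [mpProdNeg, mpId]⟩
  | @tail b c _ hbc ih =>
    obtain ⟨n, hn⟩ := ih
    obtain ⟨k, hib, hbc⟩ :=
      ((eventually_mpProdNeg_ne_bot (hdiag · b) hn).and_frequently (hE b c hbc)).exists
    exact ⟨k + 1, mpProdNeg_succ_ne_bot hib hbc⟩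

lemma eventually_forall_mpProdNeg_ne_bot {E : Fin d → Fin d → Prop}
    (hdiag : ∀ (k : ℕ) (i : Fin d), A (-(k + 1 : ℕ)) i i ≠ ⊥)
    (hE : ∀ a b, E a b → ∃ᶠ n in atTop, A (-(n + 1 : ℕ)) a b ≠ ⊥)
    (hconn : ∀ i j, Relation.ReflTransGen E i j) :
    ∀ᶠ n in atTop, ∀ i j, mpProdNeg A n i j ≠ ⊥ := by
  refine eventually_all.2 fun i => eventually_all.2 fun j => ?_
  obtain ⟨n, hn⟩ := exists_mpProdNeg_ne_bot hdiag hE (hconn i j)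
  exact eventually_mpProdNeg_ne_bot (hdiag · j) hn

end Finiteness

lemma tendsto_inv_mul_toE_of_le_of_le_add {u v : ℕ → MP} {γ : EReal} (K : ℝ)
    (huv : ∀ n, u n ≤ v n) (hvu : ∀ᶠ n in atTop, v n ≤ K + u n)
    (hv : Tendsto (fun n : ℕ => ((n : ℝ)⁻¹ : EReal) * toE (v n)) atTop (𝓝 γ)) :
    Tendsto (fun n : ℕ => ((n : ℝ)⁻¹ : EReal) * toE (u n)) atTop (𝓝 γ) := by
  have hinv : ∀ n : ℕ, (0 : EReal) ≤ ((n : ℝ)⁻¹ : EReal) := fun n =>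
    EReal.coe_nonneg.2 (by positivity)
  have hshift : Tendsto (fun n : ℕ => ((n : ℝ)⁻¹ : EReal) * toE (v n) + ((-(K / n) : ℝ) : EReal))
      atTop (𝓝 γ) := by
    have h0 : Tendsto (fun n : ℕ => ((-(K / n) : ℝ) : EReal)) atTop (𝓝 0) := by
      simpa using EReal.tendsto_coe.2 (tendsto_const_div_atTop_nhds_zero_nat K).neg
    simpa only [Function.comp_def, add_zero] using
      (EReal.continuousAt_add (p := (γ, 0)) (by simp) (by simp)).tendsto.comp (hv.prodMk_nhds h0)
  refine tendsto_of_tendsto_of_tendsto_of_le_of_le' hshift hv ?_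
    (Eventually.of_forall fun n => mul_le_mul_of_nonneg_left (toE_mono (huv n)) (hinv n))
  filter_upwards [hvu] with n hn
  have hsub : v n + ((-K : ℝ) : MP) ≤ u n :=
    calc v n + ((-K : ℝ) : MP) ≤ K + u n + ((-K : ℝ) : MP) := add_le_add_left hn _
      _ = u n := by
        rw [add_comm (K : MP), add_assoc, ← WithBot.coe_add, add_neg_cancel, WithBot.coe_zero,
          add_zero]
  calc ((n : ℝ)⁻¹ : EReal) * toE (v n) + ((-(K / n) : ℝ) : EReal)
      = ((n : ℝ)⁻¹ : EReal) * toE (v n + ((-K : ℝ) : MP)) := by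
        rw [toE_add_coe, EReal.left_distrib_of_nonneg_of_ne_top (hinv n) (EReal.coe_ne_top _),
          ← EReal.coe_inv, ← EReal.coe_mul]
        congr 2
        ring
    _ ≤ ((n : ℝ)⁻¹ : EReal) * toE (u n) := mul_le_mul_of_nonneg_left (toE_mono hsub) (hinv n)

section Comparison

variable {d : ℕ} (A : ℤ → Matrix (Fin d) (Fin d) MP)

lemma yvec_le_sup (n : ℕ) (i : Fin d) :
    yvec A n i ≤ Finset.univ.sup fun pq : Fin d × Fin d => mpProdNeg A n pq.1 pq.2 :=
  Finset.sup_le fun j _ =>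
    Finset.le_sup (f := fun pq : Fin d × Fin d => mpProdNeg A n pq.1 pq.2) (Finset.mem_univ (i, j))

lemma exists_sup_le_add_yvec {N : ℕ} (hN : ∀ p q, mpProdNeg A N p q ≠ ⊥) :
    ∃ K : ℝ, ∀ n, N ≤ n → ∀ i,
      (Finset.univ.sup fun pq : Fin d × Fin d => mpProdNeg A n pq.1 pq.2) ≤ K + yvec A n i := by
  set P := mpProdNeg A N
  obtain ⟨K, hK⟩ := Finite.exists_le fun x : Fin d × Fin d × Fin d =>
    (P x.1 x.2.2).unbot (hN _ _) - (P x.2.1 x.2.2).unbot (hN _ _)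
  have hrow : ∀ p i k, P p k ≤ (K : MP) + P i k := by
    intro p i k
    rw [← WithBot.coe_unbot (P p k) (hN p k), ← WithBot.coe_unbot (P i k) (hN i k),
      ← WithBot.coe_add, WithBot.coe_le_coe]
    linarith [hK (p, i, k)]
  refine ⟨K, fun n hn i => Finset.sup_le fun pq _ => ?_⟩
  obtain ⟨m, rfl⟩ := Nat.exists_eq_add_of_le hn
  calc mpProdNeg A (N + m) pq.1 pq.2
      ≤ K + mpProdNeg A (N + m) i pq.2 := by
        rw [mpProdNeg_add]
        exact mpMul_le_add_mpMul (hrow pq.1 i) _ _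
    _ ≤ K + yvec A (N + m) i :=
        add_le_add_right (Finset.le_sup (f := fun j => mpProdNeg A (N + m) i j)
          (Finset.mem_univ _)) _

theorem tendsto_yvec_of_mpProdNeg_ne_bot {N : ℕ} (hN : ∀ p q, mpProdNeg A N p q ≠ ⊥)
    {γ : EReal} (hγ : Tendsto (fun n : ℕ => ((n : ℝ)⁻¹ : EReal) *
        toE (Finset.univ.sup fun pq : Fin d × Fin d => mpProdNeg A n pq.1 pq.2)) atTop (𝓝 γ))
    (i : Fin d) :
    Tendsto (fun n : ℕ => ((n : ℝ)⁻¹ : EReal) * toE (yvec A n i)) atTop (𝓝 γ) := by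
  obtain ⟨K, hK⟩ := exists_sup_le_add_yvec A hN
  exact tendsto_inv_mul_toE_of_le_of_le_add K (yvec_le_sup A · i)
    (eventually_atTop.2 ⟨N, fun n hn => hK n hn i⟩) hγ

end Comparison

lemma Ergodic.of_leftInverse {Ω : Type*} [MeasurableSpace Ω] {μ : Measure Ω} {f g : Ω → Ω}
    (hf : Ergodic f μ) (hg : MeasurePreserving g μ μ) (hgf : Function.LeftInverse g f) :
    Ergodic g μ :=
  ⟨hg, ⟨fun s hs hgs => hf.aeconst_set hs <| by
    nth_rw 1 [← hgs]
    rw [← Set.preimage_comp, hgf.comp_eq_id, Set.preimage_id]⟩⟩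

/-- By ergodicity almost every orbit meets `s`; Poincaré recurrence then makes it return
infinitely often. -/
lemma Ergodic.ae_frequently_iterate_mem {Ω : Type*} [MeasurableSpace Ω] {μ : Measure Ω}
    [IsFiniteMeasure μ] {f : Ω → Ω} (hf : Ergodic f μ) {s : Set Ω} (hs : MeasurableSet s)
    (h0 : μ s ≠ 0) : ∀ᵐ x ∂μ, ∃ᶠ n in atTop, f^[n] x ∈ s := by
  set V := ⋃ k : ℕ, f^[k] ⁻¹' s
  have hVm : MeasurableSet V := .iUnion fun k => hf.measurable.iterate k hs
  have hfV : f ⁻¹' V ⊆ V := by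
    simp only [V, Set.preimage_iUnion, ← Set.preimage_comp, ← Function.iterate_succ]
    exact Set.iUnion_subset fun k => Set.subset_iUnion (fun k => f^[k] ⁻¹' s) (k + 1)
  have hV : ∀ᵐ x ∂μ, x ∈ V := by
    rcases hf.ae_empty_or_univ_of_preimage_ae_le hVm.nullMeasurableSet hfV.eventuallyLE with h | h
    · exact absurd (measure_mono_null (Set.subset_iUnion (fun k => f^[k] ⁻¹' s) 0)
        (ae_eq_empty.1 h)) h0
    · exact ae_iff.2 (ae_eq_univ.1 h)
  have hrec := hf.toMeasurePreserving.conservative.ae_forall_image_mem_imp_frequently_image_mem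
    hs.nullMeasurableSet
  filter_upwards [hV, hrec] with x hxV hx
  obtain ⟨k, hk⟩ := Set.mem_iUnion.1 hxV
  exact hx k hk

lemma measurableSet_eq_bot : MeasurableSet {x : MP | x = ⊥} := by
  refine ⟨{⊥}, measurableSet_singleton _, ?_⟩
  ext x
  induction x using WithBot.recBotCoe <;> simp [toE]

lemma zIter_neg_natCast {Ω : Type*} (θ θi : Ω → Ω) (k : ℕ) (ω : Ω) :
    zIter θ θi (-(k : ℤ)) ω = θi^[k] ω := by
  unfold zIter
  split_ifs with h
  · obtain rfl : k = 0 := by omega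
    rfl
  · simp

theorem ae_eventually_forall_mpProdNeg_ne_bot {d : ℕ} {Ω : Type*} [MeasurableSpace Ω]
    {μ : Measure Ω} [IsFiniteMeasure μ] (θ : Ω → Ω) {θi : Ω → Ω} (hθi : Ergodic θi μ)
    {A : Ω → Matrix (Fin d) (Fin d) MP} (hA : Measurable A)
    (hdiag : ∀ i, μ {ω | A ω i i = ⊥} = 0)
    (hconn : ∀ i j : Fin d, Relation.ReflTransGen (mpEdge μ A) i j) :
    ∀ᵐ ω ∂μ, ∀ᶠ n in atTop, ∀ i j, mpProdNeg (fun k => A (zIter θ θi k ω)) n i j ≠ ⊥ := by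
  have hmeas : ∀ a b, MeasurableSet {ω | A ω a b ≠ ⊥} := fun a b =>
    (measurableSet_eq_bot.preimage ((measurable_pi_apply b).comp
      ((measurable_pi_apply a).comp hA))).compl
  have hdiag' : ∀ᵐ ω ∂μ, ∀ (k : ℕ) i, A (θi^[k + 1] ω) i i ≠ ⊥ :=
    ae_all_iff.2 fun k => ae_all_iff.2 fun i =>
      (hθi.toMeasurePreserving.iterate (k + 1)).quasiMeasurePreserving.ae
        (measure_eq_zero_iff_ae_notMem.1 (hdiag i))
  have hocc : ∀ᵐ ω ∂μ, ∀ a b, mpEdge μ A a b → ∃ᶠ n in atTop, A (θi^[n + 1] ω) a b ≠ ⊥ := by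
    refine ae_all_iff.2 fun a => ae_all_iff.2 fun b => ?_
    by_cases hab : mpEdge μ A a b
    · have hpos : μ (θi ⁻¹' {ω | A ω a b ≠ ⊥}) ≠ 0 := by
        rw [hθi.measure_preimage (hmeas a b).nullMeasurableSet]
        exact hab.ne'
      filter_upwards [hθi.ae_frequently_iterate_mem (hθi.measurable (hmeas a b)) hpos]
        with ω hω _
      simpa only [Set.mem_preimage, ← Function.iterate_succ_apply', Set.mem_ofPred_eq] using hω
    · exact Eventually.of_forall fun _ h => absurd h hab
  filter_upwards [hdiag', hocc] with ω hdω hoω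
  refine eventually_forall_mpProdNeg_ne_bot (fun k i => ?_) (fun a b hab => ?_) hconn
  · simpa only [zIter_neg_natCast] using hdω k i
  · simpa only [zIter_neg_natCast] using hoω a b hab

theorem stmt15_general {d : ℕ} {Ω : Type*} [MeasurableSpace Ω] (μ : Measure Ω)
    [IsProbabilityMeasure μ]
    (θ θi : Ω → Ω) (hθ : Ergodic θ μ) (hθi : MeasurePreserving θi μ μ)
    (hli : Function.LeftInverse θi θ)
    (A : Ω → Matrix (Fin d) (Fin d) MP) (hA : Measurable A)
    (hdiag : ∀ i, μ {ω | A ω i i = ⊥} = 0)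
    (hconn : ∀ i j : Fin d, Relation.ReflTransGen (mpEdge μ A) i j)
    (γ : EReal)
    -- γ is the maximal Lyapunov exponent
    (hγ : ∀ᵐ ω ∂μ, Tendsto (fun n : ℕ => ((n : ℝ)⁻¹ : EReal) *
        toE (Finset.univ.sup fun ij : Fin d × Fin d =>
          mpProdNeg (fun k => A (zIter θ θi k ω)) n ij.1 ij.2)) atTop (𝓝 γ)) :
    ∀ᵐ ω ∂μ, ∀ i, Tendsto (fun n : ℕ => ((n : ℝ)⁻¹ : EReal) *
        toE (yvec (fun k => A (zIter θ θi k ω)) n i)) atTop (𝓝 γ) := by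
  filter_upwards [ae_eventually_forall_mpProdNeg_ne_bot θ (hθ.of_leftInverse hθi hli) hA hdiag
    hconn, hγ] with ω hfin hγω i
  obtain ⟨N, hN⟩ := hfin.exists
  exact tendsto_yvec_of_mpProdNeg_ne_bot _ hN hγω i

/-- for a stationary ergodic sequence `A(n) = A ∘ θⁿ` (n ∈ ℤ) of random
max-plus matrices with strongly connected incidence graph, `P(A_{ii}(0) = -∞) = 0` for
every `i`, and `max_{A_{ij}(0) ≠ -∞} A⁺_{ij}(0)` integrable, one has
`(1/n)y(n,0) → γ(A)·(1,…,1)` a.s., where `γ(A)` is the maximal Lyapunov exponent. -/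
theorem stmt15 {d : ℕ} {Ω : Type*} [MeasurableSpace Ω] (μ : Measure Ω)
    [IsProbabilityMeasure μ]
    (θ θi : Ω → Ω) (hθ : Ergodic θ μ) (hθi : MeasurePreserving θi μ μ)
    (hli : Function.LeftInverse θi θ) (hri : Function.RightInverse θi θ)
    (A : Ω → Matrix (Fin d) (Fin d) MP) (hA : Measurable A)
    (hdiag : ∀ i, μ {ω | A ω i i = ⊥} = 0)
    (hconn : ∀ i j : Fin d, Relation.ReflTransGen (mpEdge μ A) i j)
    (hint : Integrable (fun ω => ⨆ ij : Fin d × Fin d, mpPlus (A ω ij.1 ij.2)) μ)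
    (γ : EReal)
    -- γ is the maximal Lyapunov exponent
    (hγ : ∀ᵐ ω ∂μ, Tendsto (fun n : ℕ => ((n : ℝ)⁻¹ : EReal) *
        toE (Finset.univ.sup fun ij : Fin d × Fin d =>
          mpProdNeg (fun k => A (zIter θ θi k ω)) n ij.1 ij.2)) atTop (𝓝 γ)) :
    ∀ᵐ ω ∂μ, ∀ i, Tendsto (fun n : ℕ => ((n : ℝ)⁻¹ : EReal) *
        toE (yvec (fun k => A (zIter θ θi k ω)) n i)) atTop (𝓝 γ) :=
  stmt15_general μ θ θi hθ hθi hli A hA hdiag hconn γ hγ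
end
end

section
/- Consider the two-point probability space Ω = {ω_0, ω_1} with uniform measure and the swap map θ, and the random matrix A with A(ω_0) = [[-∞,0],[0,-∞]] and A(ω_1) = [[-∞,1],[0,-∞]]. For the sequence A(n) = A∘θ^n and x(n,z) = A(n-1)⋯A(0)·z (max-plus action), one has x(2n,z)(ω_0) = (z_1+n, z_2), x(2n+1,z)(ω_0) = (z_2, z_1+n), x(2n,z)(ω_1) = (z_1, z_2+n), x(2n+1,z)(ω_1) = (z_2+n+1, z_1). Consequently (1/n)x(n,0) does not converge almost surely. -/
/-! Every `A(θᵏω)` is antidiagonal in the max-plus sense. A product of two antidiagonal matrices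
is diagonal, so along the 2-periodic sequence `A(θᵏω)` the products `A(n-1)⋯A(0)` alternate
between diagonal and antidiagonal matrices whose real entries grow linearly, at slopes given by
the two-step products. At `ω₀` the first coordinate of `x(n,0)` is `n/2` at even times and `0` at
odd ones, so `x₁(n,0)/n` oscillates between `1/2` and `0`; at `ω₁` the same holds for the second
coordinate. -/

open Filter MeasureTheory Topology
noncomputable section

/-- The random matrix of Example 1: `A(ω₀) = [[-∞,0],[0,-∞]]`, `A(ω₁) = [[-∞,1],[0,-∞]]`,
on the two-point space `Ω = Bool` (`ω₀ = false`, `ω₁ = true`) with the swap map `not`. -/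
def exAmat : Bool → Matrix (Fin 2) (Fin 2) MP
  | false => !![⊥, (0 : MP); (0 : MP), ⊥]
  | true => !![⊥, ((1 : ℝ) : MP); (0 : MP), ⊥]

/-- `x(n,z)(ω) = A(n-1)⋯A(0)·z` for the sequence `A(n) = exAmat ∘ notⁿ`. -/
def exX (ω : Bool) (z : Fin 2 → ℝ) (n : ℕ) : Fin 2 → MP :=
  fun i => Finset.univ.sup fun j =>
    mpProdFwd (fun k => exAmat (Bool.not^[k] ω)) n i j + ((z j : ℝ) : MP)

def mpDiag2 (p q : ℝ) : Matrix (Fin 2) (Fin 2) MP := !![(p : MP), ⊥; ⊥, (q : MP)]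

def mpAntidiag2 (a b : ℝ) : Matrix (Fin 2) (Fin 2) MP := !![⊥, (a : MP); (b : MP), ⊥]

lemma mpMul_antidiag2_diag2 (a b p q : ℝ) :
    mpMul (mpAntidiag2 a b) (mpDiag2 p q) = mpAntidiag2 (a + q) (b + p) := by
  ext i j; fin_cases i <;> fin_cases j <;> simp [mpMul, mpAntidiag2, mpDiag2, Fin.univ_succ]

lemma mpMul_antidiag2_antidiag2 (a b c d : ℝ) :
    mpMul (mpAntidiag2 a b) (mpAntidiag2 c d) = mpDiag2 (a + d) (b + c) := by
  ext i j; fin_cases i <;> fin_cases j <;> simp [mpMul, mpAntidiag2, Fin.univ_succ, mpDiag2]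

lemma mpId_two : mpId 2 = mpDiag2 0 0 := by
  ext i j; fin_cases i <;> fin_cases j <;> simp [mpId, mpDiag2]

lemma mpProdFwd_antidiag2_periodic {A : ℕ → Matrix (Fin 2) (Fin 2) MP} {a b c d : ℝ}
    (hA_even : ∀ k, A (2 * k) = mpAntidiag2 a b) (hA_odd : ∀ k, A (2 * k + 1) = mpAntidiag2 c d)
    (n : ℕ) :
    mpProdFwd A (2 * n) = mpDiag2 (n * (c + b)) (n * (d + a)) ∧
      mpProdFwd A (2 * n + 1) = mpAntidiag2 (a + n * (d + a)) (b + n * (c + b)) := by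
  induction n with
  | zero =>
    have h0 := hA_even 0
    rw [mul_zero] at h0
    simp [mpProdFwd, h0, mpId_two, mpMul_antidiag2_diag2]
  | succ n ih =>
    have h_even :
        mpProdFwd A (2 * (n + 1)) = mpDiag2 ((n + 1 : ℕ) * (c + b)) ((n + 1 : ℕ) * (d + a)) := by
      rw [show 2 * (n + 1) = 2 * n + 1 + 1 by ring, mpProdFwd, hA_odd, ih.2,
        mpMul_antidiag2_antidiag2]
      congr 1 <;> push_cast <;> ring
    refine ⟨h_even, ?_⟩
    rw [mpProdFwd, hA_even, h_even, mpMul_antidiag2_diag2]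

lemma mpAct_diag2 (p q : ℝ) (z : Fin 2 → ℝ) :
    mpAct (mpDiag2 p q) (fun j => (z j : MP)) =
      ![((p + z 0 : ℝ) : MP), ((q + z 1 : ℝ) : MP)] := by
  ext i; fin_cases i <;> simp [mpAct, mpDiag2, Fin.univ_succ]

lemma mpAct_antidiag2 (a b : ℝ) (z : Fin 2 → ℝ) :
    mpAct (mpAntidiag2 a b) (fun j => (z j : MP)) =
      ![((a + z 1 : ℝ) : MP), ((b + z 0 : ℝ) : MP)] := by
  ext i; fin_cases i <;> simp [mpAct, mpAntidiag2, Fin.univ_succ]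

lemma exX_eq_mpAct (ω : Bool) (z : Fin 2 → ℝ) (n : ℕ) :
    exX ω z n = mpAct (mpProdFwd (fun k => exAmat (Bool.not^[k] ω)) n) (fun j => (z j : MP)) :=
  rfl

lemma exAmat_false : exAmat false = mpAntidiag2 0 0 := by
  simp [exAmat, mpAntidiag2]

lemma exAmat_true : exAmat true = mpAntidiag2 1 0 := by
  simp [exAmat, mpAntidiag2]

lemma exX_false (z : Fin 2 → ℝ) (n : ℕ) :
    exX false z (2 * n) = ![((z 0 + n : ℝ) : MP), ((z 1 : ℝ) : MP)] ∧
      exX false z (2 * n + 1) = ![((z 1 : ℝ) : MP), ((z 0 + n : ℝ) : MP)] := by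
  obtain ⟨h_even, h_odd⟩ := mpProdFwd_antidiag2_periodic
    (A := fun k => exAmat (Bool.not^[k] false))
    (fun k => by rw [Bool.involutive_not.iterate_two_mul, id, exAmat_false])
    (fun k => by rw [Bool.involutive_not.iterate_two_mul_add_one, Bool.not_false, exAmat_true]) n
  refine ⟨?_, ?_⟩
  · rw [exX_eq_mpAct, h_even, mpAct_diag2]; simp [add_comm]
  · rw [exX_eq_mpAct, h_odd, mpAct_antidiag2]; simp [add_comm]

lemma exX_true (z : Fin 2 → ℝ) (n : ℕ) :
    exX true z (2 * n) = ![((z 0 : ℝ) : MP), ((z 1 + n : ℝ) : MP)] ∧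
      exX true z (2 * n + 1) = ![((z 1 + n + 1 : ℝ) : MP), ((z 0 : ℝ) : MP)] := by
  obtain ⟨h_even, h_odd⟩ := mpProdFwd_antidiag2_periodic
    (A := fun k => exAmat (Bool.not^[k] true))
    (fun k => by rw [Bool.involutive_not.iterate_two_mul, id, exAmat_true])
    (fun k => by rw [Bool.involutive_not.iterate_two_mul_add_one, Bool.not_true, exAmat_false]) n
  refine ⟨?_, ?_⟩
  · rw [exX_eq_mpAct, h_even, mpAct_diag2]; simp [add_comm]
  · rw [exX_eq_mpAct, h_odd, mpAct_antidiag2]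
    simp only [zero_add, mul_zero, mul_one, add_zero]
    congr 2
    ring

lemma not_tendsto_of_tendsto_even_odd {X : Type*} [TopologicalSpace X] [T2Space X]
    {f : ℕ → X} {a b : X} (hab : a ≠ b) (h_even : Tendsto (fun m => f (2 * m)) atTop (𝓝 a))
    (h_odd : Tendsto (fun m => f (2 * m + 1)) atTop (𝓝 b)) (L : X) :
    ¬ Tendsto f atTop (𝓝 L) := by
  intro hf
  have h_two_mul : Tendsto (fun m : ℕ => 2 * m) atTop atTop :=
    tendsto_id.const_mul_atTop' two_pos
  have h_two_mul_add_one := (tendsto_add_atTop_nat 1).comp h_two_mul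
  exact hab <| (tendsto_nhds_unique h_even (hf.comp h_two_mul)).trans
    (tendsto_nhds_unique (hf.comp h_two_mul_add_one) h_odd)

lemma tendsto_inv_two_mul_mul_self :
    Tendsto (fun m : ℕ => (2 * (m : ℝ))⁻¹ * m) atTop (𝓝 2⁻¹) := by
  refine tendsto_const_nhds.congr' ?_
  filter_upwards [eventually_ne_atTop 0] with m hm
  field_simp

/-- explicit computation of `x(n,z)` for Example 1
(the two-point swap system), and the consequent a.s. non-convergence of `(1/n)x(n,0)`
(the measure being uniform on the two points, a.s. non-convergence means
non-convergence at both points). -/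
theorem stmt16 :
    (∀ (z : Fin 2 → ℝ) (n : ℕ),
      exX false z (2 * n) = ![((z 0 + n : ℝ) : MP), ((z 1 : ℝ) : MP)] ∧
      exX false z (2 * n + 1) = ![((z 1 : ℝ) : MP), ((z 0 + n : ℝ) : MP)] ∧
      exX true z (2 * n) = ![((z 0 : ℝ) : MP), ((z 1 + n : ℝ) : MP)] ∧
      exX true z (2 * n + 1) = ![((z 1 + n + 1 : ℝ) : MP), ((z 0 : ℝ) : MP)]) ∧
    (∀ ω : Bool, ¬ ∃ L : Fin 2 → ℝ, ∀ i, Tendsto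
      (fun n : ℕ => (n : ℝ)⁻¹ * (WithBot.unbotD 0 (exX ω (fun _ => 0) n i))) atTop (𝓝 (L i))) := by
  refine ⟨fun z n => ⟨(exX_false z n).1, (exX_false z n).2, (exX_true z n).1, (exX_true z n).2⟩, ?_⟩
  rintro ω ⟨L, hL⟩
  cases ω
  · refine not_tendsto_of_tendsto_even_odd (by norm_num : (2⁻¹ : ℝ) ≠ 0) ?_ ?_ _ (hL 0)
    · simpa [(exX_false _ _).1] using tendsto_inv_two_mul_mul_self
    · simp [(exX_false _ _).2]
  · refine not_tendsto_of_tendsto_even_odd (by norm_num : (2⁻¹ : ℝ) ≠ 0) ?_ ?_ _ (hL 1)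
    · simpa [(exX_true _ _).1] using tendsto_inv_two_mul_mul_self
    · simp [(exX_true _ _).2]
end
end

section
/- Let (A(n))_{n∈ℕ} be i.i.d. random 3×3 max-plus matrices taking value B = [[0,-∞,-∞],[0,-∞,-∞],[0,1,1]] with probability p ∈ (0,1) and C = [[0,-∞,-∞],[0,-∞,0],[0,0,-∞]] with probability 1-p. Then for x(n,0) = A(n-1)⋯A(0)·0 (max-plus action), almost surely (1/n)x_1(n,0) → 0, while for i ∈ {2,3}, liminf (1/n)x_i(n,0) = 0 and limsup (1/n)x_i(n,0) = p. In particular (1/n)x(n,0) does not converge almost surely. -/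
/-!
Along a sample path in which every matrix is `B` or `C`, the state `x(n,0)` always has the form
`(0, 0, N n)` or `(0, N n, 0)`, where `N n` counts the `B`'s among `A(0), …, A(n-1)`: indeed
`B·(0,x,y) = (0, 0, max x y + 1)` and `C·(0,x,y) = (0, y, x)` for `x, y ≥ 0`. Since `p < 1`, `C`
occurs infinitely often, so both shapes recur, and `x_2(n,0)/n`, `x_3(n,0)/n` keep oscillating
between `0` and `N n / n`, which tends to `p` by the strong law of large numbers.
-/
open Filter MeasureTheory Topology
noncomputable section

/-- The matrix `B` of Example 2. -/
def exBmat : Matrix (Fin 3) (Fin 3) MP :=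
  !![(0 : MP), ⊥, ⊥; (0 : MP), ⊥, ⊥; (0 : MP), ((1 : ℝ) : MP), ((1 : ℝ) : MP)]

/-- The matrix `C` of Example 2. -/
def exCmat : Matrix (Fin 3) (Fin 3) MP :=
  !![(0 : MP), ⊥, ⊥; (0 : MP), ⊥, (0 : MP); (0 : MP), (0 : MP), ⊥]

lemma WithBot.add_finsetSup {α ι : Type*} [Add α] [LinearOrder α] [AddLeftMono α]
    (s : Finset ι) (f : ι → WithBot α) (c : WithBot α) :
    c + s.sup f = s.sup fun i => c + f i :=
  Finset.apply_sup_eq_sup_comp_of_linearOrder (c + ·) (fun _ _ h => add_le_add_right h c)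
    (WithBot.add_bot c)

theorem xvec_succ {d : ℕ} (A : ℕ → Matrix (Fin d) (Fin d) MP) (n : ℕ) :
    xvec A (n + 1) = mpAct (A n) (xvec A n) := by
  ext1 i
  simp only [xvec, mpAct, mpProdFwd, mpMul, WithBot.add_finsetSup]
  exact Finset.sup_comm _ _ _

section LiminfLimsup

variable {ι : Type*} {l : Filter ι} {f g : ι → ℝ}

lemma liminf_eq_zero_of_frequently_eq_zero (hf : 0 ≤ f) (hbdd : IsBoundedUnder (· ≤ ·) l f)
    (h : ∃ᶠ i in l, f i = 0) : liminf f l = 0 :=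
  have : l.NeBot := (frequently_iff_neBot.1 h).mono inf_le_left
  le_antisymm (liminf_le_of_frequently_le (h.mono fun _ hi => hi.le) (isBoundedUnder_of ⟨0, hf⟩))
    (le_liminf_of_le hbdd.isCoboundedUnder_ge (Eventually.of_forall hf))

lemma limsup_eq_of_frequently_eq {p : ℝ} (hbdd : IsBoundedUnder (· ≥ ·) l f) (hfg : f ≤ᶠ[l] g)
    (hg : Tendsto g l (𝓝 p)) (h : ∃ᶠ i in l, f i = g i) : limsup f l = p := by
  have hbdd' : IsBoundedUnder (· ≤ ·) l f := hg.isBoundedUnder_le.mono_le hfg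
  set l' := l ⊓ 𝓟 {i | f i = g i}
  have : l'.NeBot := frequently_iff_neBot.1 h
  have : l.NeBot := this.mono inf_le_left
  have hf' : Tendsto f l' (𝓝 p) :=
    (hg.mono_left inf_le_left).congr' (eventually_inf_principal.2 (.of_forall fun _ hi => hi.symm))
  refine le_antisymm ?_ ?_
  · calc limsup f l ≤ limsup g l :=
          limsup_le_limsup hfg hbdd.isCoboundedUnder_le hg.isBoundedUnder_le
      _ = p := hg.limsup_eq
  · calc p = limsup f l' := hf'.limsup_eq.symm
      _ ≤ limsup f l := limsup_le_limsup_of_le inf_le_left hf'.isCoboundedUnder_le hbdd'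

end LiminfLimsup

lemma toE_injective : Function.Injective toE := by
  intro x y h
  induction x using WithBot.recBotCoe <;> induction y using WithBot.recBotCoe <;> simp_all [toE]

instance : MeasurableSingletonClass MP where
  measurableSet_singleton c := by
    simpa [Set.preimage, toE_injective.eq_iff] using
      (measurableSet_singleton (toE c)).preimage (comap_measurable toE)

instance {d : ℕ} : MeasurableSingletonClass (Matrix (Fin d) (Fin d) MP) :=
  inferInstanceAs (MeasurableSingletonClass (Fin d → Fin d → MP))

section StrongLaw

open ProbabilityTheory

variable {Ω : Type*} [MeasurableSpace Ω]

lemma identDistrib_indicator_const {Ω' β : Type*} [MeasurableSpace Ω'] [Zero β]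
    [MeasurableSpace β] {μ : Measure Ω} {ν : Measure Ω'} [IsProbabilityMeasure μ]
    [IsProbabilityMeasure ν] {E : Set Ω} {F : Set Ω'} (hE : MeasurableSet E)
    (hF : MeasurableSet F) (h : μ E = ν F) (c : β) :
    IdentDistrib (E.indicator fun _ => c) (F.indicator fun _ => c) μ ν where
  aemeasurable_fst := (measurable_const.indicator hE).aemeasurable
  aemeasurable_snd := (measurable_const.indicator hF).aemeasurable
  map_eq := by
    classical
    ext s hs
    rw [Measure.map_apply (measurable_const.indicator hE) hs,
      Measure.map_apply (measurable_const.indicator hF) hs,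
      Set.indicator_const_preimage_eq_union, Set.indicator_const_preimage_eq_union]
    split_ifs <;> simp [prob_compl_eq_one_sub hE, prob_compl_eq_one_sub hF, h]

theorem ae_tendsto_card_filter_div {α : Type*} [MeasurableSpace α] (μ : Measure Ω)
    [IsProbabilityMeasure μ] (A : ℕ → Ω → α) (hA : ∀ n, Measurable (A n))
    (hindep : iIndepFun A μ) {P : α → Prop} [DecidablePred P] (hP : MeasurableSet {x | P x})
    (hprob : ∀ n, μ {ω | P (A n ω)} = μ {ω | P (A 0 ω)}) :
    ∀ᵐ ω ∂μ, Tendsto (fun n : ℕ => (((Finset.range n).filter fun k => P (A k ω)).card : ℝ) / n)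
      atTop (𝓝 (μ.real {ω | P (A 0 ω)})) := by
  set X : ℕ → Ω → ℝ := fun n => {ω | P (A n ω)}.indicator fun _ => 1
  have hXindep : iIndepFun X μ :=
    hindep.comp (fun _ => {x | P x}.indicator fun _ => 1) fun _ => measurable_const.indicator hP
  have hint : Integrable (X 0) μ := (integrable_const 1).indicator (hA 0 hP)
  have hident n : IdentDistrib (X n) (X 0) μ μ :=
    identDistrib_indicator_const (hA n hP) (hA 0 hP) (hprob n) 1
  have hmean : μ[X 0] = μ.real {ω | P (A 0 ω)} := by
    simp only [X]
    rw [integral_indicator_const (1 : ℝ) (s := {ω | P (A 0 ω)}) (hA 0 hP), smul_eq_mul, mul_one]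
  filter_upwards [strong_law_ae_real X hint (fun i j hij => hXindep.indepFun hij) hident]
    with ω hω
  rw [hmean] at hω
  refine hω.congr fun n => ?_
  rw [Finset.natCast_card_filter]
  simp only [X, Set.indicator_apply, Set.mem_ofPred_eq]

end StrongLaw

lemma Fin.sup_univ_three {α : Type*} [SemilatticeSup α] [OrderBot α] (f : Fin 3 → α) :
    Finset.univ.sup f = f 0 ⊔ f 1 ⊔ f 2 := by
  simp [Fin.univ_succ, Finset.sup_insert, sup_assoc]

lemma mpAct_exBmat {x y : ℝ} (hx : 0 ≤ x) :
    mpAct exBmat ![0, (x : MP), (y : MP)] = ![0, 0, ((max x y + 1 : ℝ) : MP)] := by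
  ext1 i
  fin_cases i <;> simp [mpAct, Fin.sup_univ_three, exBmat]
  norm_cast
  rw [max_eq_right (by linarith : (0 : ℝ) ≤ 1 + x), max_add_add_left, add_comm]

lemma mpAct_exCmat {x y : ℝ} (hx : 0 ≤ x) (hy : 0 ≤ y) :
    mpAct exCmat ![0, (x : MP), (y : MP)] = ![0, (y : MP), (x : MP)] := by
  ext1 i
  fin_cases i <;> simp [mpAct, Fin.sup_univ_three, exCmat] <;> assumption

lemma exBmat_ne_exCmat : exBmat ≠ exCmat := fun h => by
  simpa [exBmat, exCmat] using congrFun (congrFun h 1) 2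

def numB (a : ℕ → Matrix (Fin 3) (Fin 3) MP) (n : ℕ) : ℕ :=
  ((Finset.range n).filter fun k => a k = exBmat).card

section SamplePath

variable {a : ℕ → Matrix (Fin 3) (Fin 3) MP}

lemma numB_succ_of_eq_exBmat {n : ℕ} (h : a n = exBmat) : numB a (n + 1) = numB a n + 1 := by
  rw [numB, Finset.range_add_one, Finset.filter_insert, if_pos h,
    Finset.card_insert_of_notMem (by simp), numB]

lemma numB_succ_of_eq_exCmat {n : ℕ} (h : a n = exCmat) : numB a (n + 1) = numB a n := by
  rw [numB, Finset.range_add_one, Finset.filter_insert, if_neg (h ▸ exBmat_ne_exCmat.symm), numB]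

lemma xvec_eq_or_eq (hBC : ∀ k, a k = exBmat ∨ a k = exCmat) (n : ℕ) :
    xvec a n = ![0, 0, ((numB a n : ℝ) : MP)] ∨ xvec a n = ![0, ((numB a n : ℝ) : MP), 0] := by
  induction n with
  | zero =>
    left
    ext i
    fin_cases i <;> simp [xvec, mpProdFwd, mpId, Fin.sup_univ_three, numB]
  | succ n ih =>
    have hN : (0 : ℝ) ≤ numB a n := Nat.cast_nonneg _
    rw [xvec_succ]
    rcases hBC n with hB | hC
    · left
      rw [hB, numB_succ_of_eq_exBmat hB]
      rcases ih with h | h <;> rw [h]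
      · simpa [hN] using mpAct_exBmat (x := 0) (y := numB a n) le_rfl
      · simpa using mpAct_exBmat (y := 0) hN
    · rw [hC, numB_succ_of_eq_exCmat hC]
      rcases ih with h | h <;> rw [h]
      · right; simpa using mpAct_exCmat le_rfl hN
      · left; simpa using mpAct_exCmat hN le_rfl

lemma sub_le_numB {N n : ℕ} (h : ∀ k, N ≤ k → k < n → a k = exBmat) : n - N ≤ numB a n := by
  rw [← Nat.card_Ico]
  refine Finset.card_le_card fun k hk => ?_
  rw [Finset.mem_Ico] at hk
  simpa using ⟨hk.2, h k hk.1 hk.2⟩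

lemma frequently_eq_exCmat (hBC : ∀ k, a k = exBmat ∨ a k = exCmat) {p : ℝ} (hp1 : p < 1)
    (hN : Tendsto (fun n => (numB a n : ℝ) / n) atTop (𝓝 p)) :
    ∃ᶠ k in atTop, a k = exCmat := by
  by_contra h
  obtain ⟨N, hB⟩ := eventually_atTop.1 (not_frequently.1 h)
  have hle : ∀ n ≥ N + 1, 1 - (N : ℝ) / n ≤ numB a n / n := fun n hn => by
    have hn' : (0 : ℝ) < n := Nat.cast_pos.2 (by omega)
    have hsub := sub_le_numB (n := n) fun k hk _ => (hBC k).resolve_right (hB k hk)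
    rw [one_sub_div hn'.ne', div_le_div_iff_of_pos_right hn', ← Nat.cast_sub (by omega)]
    exact_mod_cast hsub
  have h1 : Tendsto (fun n : ℕ => 1 - (N : ℝ) / n) atTop (𝓝 1) := by
    simpa using tendsto_const_nhds.sub (tendsto_const_div_atTop_nhds_zero_nat (N : ℝ))
  exact hp1.not_ge (le_of_tendsto_of_tendsto h1 hN (eventually_atTop.2 ⟨N + 1, hle⟩))

/-- A `C` at time `m` swaps the last two coordinates, so the states at times `m` and `m + 1`
have both shapes. -/
lemma frequently_xvec_eq (hBC : ∀ k, a k = exBmat ∨ a k = exCmat)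
    (hC : ∃ᶠ k in atTop, a k = exCmat) :
    (∃ᶠ n in atTop, xvec a n = ![0, 0, ((numB a n : ℝ) : MP)]) ∧
      ∃ᶠ n in atTop, xvec a n = ![0, ((numB a n : ℝ) : MP), 0] := by
  have hN : ∀ n, (0 : ℝ) ≤ numB a n := fun n => Nat.cast_nonneg _
  have swap : ∀ m, a m = exCmat → ∀ x y : ℝ, 0 ≤ x → 0 ≤ y →
      xvec a m = ![0, (x : MP), (y : MP)] → xvec a (m + 1) = ![0, (y : MP), (x : MP)] :=
    fun m hm x y hx hy h => by rw [xvec_succ, hm, h, mpAct_exCmat hx hy]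
  simp only [frequently_atTop] at hC ⊢
  constructor <;> intro N <;> obtain ⟨m, hm, hCm⟩ := hC N <;>
    rcases xvec_eq_or_eq hBC m with h | h
  · exact ⟨m, hm, h⟩
  · refine ⟨m + 1, by omega, ?_⟩
    rw [numB_succ_of_eq_exCmat hCm]
    simpa using swap m hCm _ 0 (hN m) le_rfl (by simpa using h)
  · refine ⟨m + 1, by omega, ?_⟩
    rw [numB_succ_of_eq_exCmat hCm]
    simpa using swap m hCm 0 _ le_rfl (hN m) (by simpa using h)
  · exact ⟨m, hm, h⟩

lemma unbotD_xvec_of_ne_zero (hBC : ∀ k, a k = exBmat ∨ a k = exCmat)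
    (hC : ∃ᶠ k in atTop, a k = exCmat) {i : Fin 3} (hi : i ≠ 0) :
    (∀ n, WithBot.unbotD 0 (xvec a n i) = 0 ∨ WithBot.unbotD 0 (xvec a n i) = numB a n) ∧
      (∃ᶠ n in atTop, WithBot.unbotD 0 (xvec a n i) = 0) ∧
      ∃ᶠ n in atTop, WithBot.unbotD 0 (xvec a n i) = numB a n := by
  obtain ⟨hL, hR⟩ := frequently_xvec_eq hBC hC
  fin_cases i
  · exact absurd rfl hi
  · refine ⟨fun n => ?_, hL.mono fun n h => by simp [h], hR.mono fun n h => by simp [h]⟩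
    rcases xvec_eq_or_eq hBC n with h | h <;> simp [h]
  · refine ⟨fun n => ?_, hR.mono fun n h => by simp [h], hL.mono fun n h => by simp [h]⟩
    rcases xvec_eq_or_eq hBC n with h | h <;> simp [h]

lemma liminf_limsup_xvec (hBC : ∀ k, a k = exBmat ∨ a k = exCmat) {p : ℝ} (hp1 : p < 1)
    (hN : Tendsto (fun n => (numB a n : ℝ) / n) atTop (𝓝 p)) {i : Fin 3} (hi : i ≠ 0) :
    liminf (fun n : ℕ => (n : ℝ)⁻¹ * WithBot.unbotD 0 (xvec a n i)) atTop = 0 ∧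
      limsup (fun n : ℕ => (n : ℝ)⁻¹ * WithBot.unbotD 0 (xvec a n i)) atTop = p := by
  obtain ⟨hval, h0, hnumB⟩ := unbotD_xvec_of_ne_zero hBC (frequently_eq_exCmat hBC hp1 hN) hi
  have hg : Tendsto (fun n : ℕ => (n : ℝ)⁻¹ * numB a n) atTop (𝓝 p) := by
    simpa only [div_eq_inv_mul] using hN
  have hf0 : ∀ n : ℕ, 0 ≤ (n : ℝ)⁻¹ * WithBot.unbotD 0 (xvec a n i) := fun n => by
    rcases hval n with h | h <;> rw [h] <;> positivity
  have hfg : ∀ n : ℕ, (n : ℝ)⁻¹ * WithBot.unbotD 0 (xvec a n i) ≤ (n : ℝ)⁻¹ * numB a n :=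
    fun n => by
      rcases hval n with h | h
      · rw [h, mul_zero]; positivity
      · rw [h]
  exact ⟨liminf_eq_zero_of_frequently_eq_zero hf0 (hg.isBoundedUnder_le.mono_le (.of_forall hfg))
      (h0.mono fun n h => by simp [h]),
    limsup_eq_of_frequently_eq (isBoundedUnder_of ⟨0, hf0⟩) (.of_forall hfg) hg
      (hnumB.mono fun n h => by simp [h])⟩

theorem xvec_asymptotics (hBC : ∀ k, a k = exBmat ∨ a k = exCmat) {p : ℝ} (hp0 : 0 < p)
    (hp1 : p < 1) (hN : Tendsto (fun n => (numB a n : ℝ) / n) atTop (𝓝 p)) :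
    Tendsto (fun n : ℕ => (n : ℝ)⁻¹ * WithBot.unbotD 0 (xvec a n 0)) atTop (𝓝 0) ∧
      (∀ i : Fin 3, i ≠ 0 →
        liminf (fun n : ℕ => (n : ℝ)⁻¹ * WithBot.unbotD 0 (xvec a n i)) atTop = 0 ∧
        limsup (fun n : ℕ => (n : ℝ)⁻¹ * WithBot.unbotD 0 (xvec a n i)) atTop = p) ∧
      ¬ ∃ L : Fin 3 → ℝ, ∀ i, Tendsto (fun n : ℕ => (n : ℝ)⁻¹ *
          WithBot.unbotD 0 (xvec a n i)) atTop (𝓝 (L i)) := by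
  have hx0 : ∀ n, xvec a n 0 = 0 := fun n => by rcases xvec_eq_or_eq hBC n with h | h <;> simp [h]
  have hlim := fun i (hi : i ≠ 0) => liminf_limsup_xvec hBC hp1 hN hi
  refine ⟨by simp [hx0], hlim, fun ⟨L, hL⟩ => ?_⟩
  obtain ⟨hinf, hsup⟩ := hlim 1 one_ne_zero
  rw [(hL 1).liminf_eq] at hinf
  rw [(hL 1).limsup_eq] at hsup
  exact hp0.ne' (hsup.symm.trans hinf)

end SamplePath

/-- for i.i.d. matrices equal to `B` with probability `p ∈ (0,1)` and `C`
with probability `1-p`, almost surely `(1/n)x_1(n,0) → 0` while for `i ∈ {2,3}`,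
`liminf (1/n)x_i(n,0) = 0` and `limsup (1/n)x_i(n,0) = p`; in particular `(1/n)x(n,0)`
does not converge almost surely. -/
theorem stmt17 {Ω : Type*} [MeasurableSpace Ω] (μ : Measure Ω) [IsProbabilityMeasure μ]
    (p : ℝ) (hp0 : 0 < p) (hp1 : p < 1)
    (A : ℕ → Ω → Matrix (Fin 3) (Fin 3) MP)
    (hmeas : ∀ n, Measurable (A n))
    (hindep : ProbabilityTheory.iIndepFun A μ)
    (hval : ∀ n, ∀ᵐ ω ∂μ, A n ω = exBmat ∨ A n ω = exCmat)
    (hpB : ∀ n, μ {ω | A n ω = exBmat} = ENNReal.ofReal p) :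
    ∀ᵐ ω ∂μ,
      (Tendsto (fun n : ℕ => (n : ℝ)⁻¹ *
        (WithBot.unbotD 0 (xvec (fun k => A k ω) n 0))) atTop (𝓝 0)) ∧
      (∀ i : Fin 3, i ≠ 0 →
        Filter.liminf (fun n : ℕ => (n : ℝ)⁻¹ *
          (WithBot.unbotD 0 (xvec (fun k => A k ω) n i))) atTop = 0 ∧
        Filter.limsup (fun n : ℕ => (n : ℝ)⁻¹ *
          (WithBot.unbotD 0 (xvec (fun k => A k ω) n i))) atTop = p) ∧
      ¬ ∃ L : Fin 3 → ℝ, ∀ i, Tendsto (fun n : ℕ => (n : ℝ)⁻¹ *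
          (WithBot.unbotD 0 (xvec (fun k => A k ω) n i))) atTop (𝓝 (L i)) := by
  have hprob : μ.real {ω | A 0 ω = exBmat} = p := by
    rw [Measure.real, hpB 0, ENNReal.toReal_ofReal hp0.le]
  have hN := ae_tendsto_card_filter_div μ A hmeas hindep (measurableSet_eq (a := exBmat))
    fun n => (hpB n).trans (hpB 0).symm
  filter_upwards [hN, ae_all_iff.2 hval] with ω hωN hωBC
  exact xvec_asymptotics hωBC hp0 hp1 (hprob ▸ hωN)
end
end
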